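/- Let G be a finite simple connected graph. If H and H' are finite simple graphs with the same order, n(H) = n(H'), then ξ(G⊙H) = ξ(G⊙H'). -/

import Mathlib

universe u v

variable {V : Type u} {W : Type v}

/-- A distance-equalizer set of a graph: for every pair of distinct vertices outside `S`
there is a vertex of `S` equidistant to both. -/
def IsDistEqSet {α : Type*} (G : SimpleGraph α) (S : Set α) : Prop :=
  ∀ ⦃x y : α⦄, x ∉ S → y ∉ S → x ≠ y → ∃ w ∈ S, G.dist w x = G.dist w y

/-- The equidistant dimension of a graph: the minimum cardinality of a distance-equalizer set. -/
noncomputable def eqdim {α : Type*} (G : SimpleGraph α) : ℕ :=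
  sInf {n | ∃ S : Set α, IsDistEqSet G S ∧ S.ncard = n}

/-- The bisector of two vertices: vertices equidistant to both. -/
def bisector {α : Type*} (G : SimpleGraph α) (x y : α) : Set α :=
  {w | G.dist w x = G.dist w y}

/-- The empty bisector graph of `G`: two distinct vertices are adjacent iff their bisector
in `G` is empty. -/
def emptyBisector {α : Type*} (G : SimpleGraph α) : SimpleGraph α where
  Adj x y := x ≠ y ∧ bisector G x y = ∅
  symm := ⟨by
    rintro x y ⟨h1, h2⟩
    refine ⟨h1.symm, Set.eq_empty_iff_forall_notMem.mpr fun w hw => ?_⟩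
    exact Set.eq_empty_iff_forall_notMem.mp h2 w
      ((show G.dist w y = G.dist w x from hw).symm)⟩
  loopless := ⟨fun _ h => h.1 rfl⟩

/-- A vertex cover of a graph: a set of vertices meeting every edge. -/
def IsVertexCover {α : Type*} (G : SimpleGraph α) (C : Set α) : Prop :=
  ∀ ⦃x y : α⦄, G.Adj x y → x ∈ C ∨ y ∈ C

/-- An independent set of a graph: a set of pairwise non-adjacent vertices. -/
def IsIndepSet {α : Type*} (G : SimpleGraph α) (A : Set α) : Prop :=
  ∀ ⦃x y : α⦄, x ∈ A → y ∈ A → ¬ G.Adj x y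

/-- The vertex cover number `β(G)`. -/
noncomputable def vcNum {α : Type*} (G : SimpleGraph α) : ℕ :=
  sInf {n | ∃ C : Set α, IsVertexCover G C ∧ C.ncard = n}

/-- The independence number `α(G)`. -/
noncomputable def indepNum {α : Type*} (G : SimpleGraph α) : ℕ :=
  sSup {n | ∃ A : Set α, IsIndepSet G A ∧ A.ncard = n}

/-- A forward-equalized pair `(X, Y)` of `G`: `X ∪ Y = V(G)` and for every
`a ∈ X \ Y` and `b ∈ Y \ X` there is `w` with `d(w,a) = d(w,b) + 1`. -/
def IsForwardEqualizedPair {α : Type*} (G : SimpleGraph α) (X Y : Set α) : Prop :=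
  X ∪ Y = Set.univ ∧
  ∀ ⦃a⦄, a ∈ X \ Y → ∀ ⦃b⦄, b ∈ Y \ X → ∃ w, G.dist w a = G.dist w b + 1

/-- `β*(G)`: the minimum of `|X ∩ Y|` over all pairs of vertex covers `X, Y` of the
empty bisector graph of `G` such that `(X, Y)` is a forward-equalized pair of `G`. -/
noncomputable def betaStar {α : Type*} (G : SimpleGraph α) : ℕ :=
  sInf {n | ∃ X Y : Set α,
    IsVertexCover (emptyBisector G) X ∧ IsVertexCover (emptyBisector G) Y ∧
    IsForwardEqualizedPair G X Y ∧ (X ∩ Y).ncard = n}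

/-- The corona product `G ⊙ H`: one copy of `H` for each vertex `i` of `G` (the vertices
`Sum.inr (i, w)`), with `i` joined to every vertex of its copy. -/
def corona (G : SimpleGraph V) (H : SimpleGraph W) : SimpleGraph (V ⊕ V × W) where
  Adj x y :=
    match x, y with
    | Sum.inl a, Sum.inl b => G.Adj a b
    | Sum.inl a, Sum.inr p => a = p.1
    | Sum.inr p, Sum.inl a => a = p.1
    | Sum.inr p, Sum.inr q => p.1 = q.1 ∧ H.Adj p.2 q.2
  symm := ⟨by
    rintro (a | p) (b | q) h
    · exact h.symm
    · exact h
    · exact h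
    · exact ⟨h.1.symm, h.2.symm⟩⟩
  loopless := ⟨by
    rintro (a | p) h
    · exact G.irrefl h
    · exact H.irrefl h.2⟩

/-!
In `G ⊙ H` distances between roots are those of `G`, and a leaf is one step further than its
root from every vertex outside its own copy of `H`; only distances inside a single copy see the
edges of `H`. A distance-equalizer set `S` is normalized by keeping the copies of `H` that it
contains entirely (with their roots as in `S`) and replacing its trace on every other copy and
its root by the root alone. This does not increase `|S|`, since `S` meets the root or the copy
of every vertex of `G`. For a normalized set, with `X` the vertices carrying a full copy and `Y`
those carrying a root, being distance-equalizing reduces to a condition on `G` alone: `X` and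
`Y` are vertex covers of the empty bisector graph forming a forward-equalized pair. `S` already
forces this, so the normalized set can be rebuilt in `G ⊙ H'` whenever `n(H) = n(H')`.
-/

open Sum

section Graph

variable {α β : Type*}

lemma isDistEqSet_univ (G : SimpleGraph α) : IsDistEqSet G Set.univ :=
  fun x _ hx => (hx (Set.mem_univ x)).elim

lemma eqdim_le_ncard {G : SimpleGraph α} {S : Set α} (hS : IsDistEqSet G S) :
    eqdim G ≤ S.ncard :=
  Nat.sInf_le ⟨S, hS, rfl⟩

lemma exists_isDistEqSet_ncard_eq_eqdim (G : SimpleGraph α) :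
    ∃ S, IsDistEqSet G S ∧ S.ncard = eqdim G :=
  Nat.sInf_mem (s := {n | ∃ S, IsDistEqSet G S ∧ S.ncard = n})
    ⟨_, Set.univ, isDistEqSet_univ G, rfl⟩

lemma isVertexCover_emptyBisector_iff {G : SimpleGraph α} {X : Set α} :
    IsVertexCover (emptyBisector G) X ↔
      ∀ ⦃i j⦄, i ∉ X → j ∉ X → i ≠ j → ∃ k, G.dist k i = G.dist k j := by
  refine ⟨fun hX i j hi hj hij => ?_, fun h i j hadj => ?_⟩
  · by_contra! hk
    exact (hX (show (emptyBisector G).Adj i j from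
      ⟨hij, Set.eq_empty_iff_forall_notMem.2 hk⟩)).elim hi hj
  · by_contra! hij
    obtain ⟨k, hk⟩ := h hij.1 hij.2 hadj.1
    exact hadj.2.subset hk

lemma SimpleGraph.Walk.exists_length_le_of_adj_or_eq {G₁ : SimpleGraph α}
    {G₂ : SimpleGraph β} {f : α → β}
    (hf : ∀ ⦃x y⦄, G₁.Adj x y → f x = f y ∨ G₂.Adj (f x) (f y)) {x y : α} (p : G₁.Walk x y) :
    ∃ q : G₂.Walk (f x) (f y), q.length ≤ p.length := by
  induction p with
  | nil => exact ⟨.nil, le_rfl⟩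
  | cons h _ ih =>
    obtain ⟨q, hq⟩ := ih
    rcases hf h with heq | hadj
    · exact ⟨q.copy heq.symm rfl, by simpa using hq.trans (Nat.le_succ _)⟩
    · exact ⟨.cons hadj q, by simpa using hq⟩

lemma SimpleGraph.dist_le_dist_of_adj_or_eq {G₁ : SimpleGraph α} {G₂ : SimpleGraph β}
    {f : α → β} (hf : ∀ ⦃x y⦄, G₁.Adj x y → f x = f y ∨ G₂.Adj (f x) (f y)) {x y : α}
    (h : G₁.Reachable x y) : G₂.dist (f x) (f y) ≤ G₁.dist x y := by
  obtain ⟨p, hp⟩ := h.exists_walk_length_eq_dist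
  obtain ⟨q, hq⟩ := p.exists_length_le_of_adj_or_eq hf
  exact (SimpleGraph.dist_le q).trans (hp ▸ hq)

end Graph

section Distance

open SimpleGraph

variable {G : SimpleGraph V} {H : SimpleGraph W}

def coronaBase : V ⊕ V × W → V := Sum.elim id Prod.fst

def coronaInlHom (G : SimpleGraph V) (H : SimpleGraph W) : G →g corona G H :=
  ⟨inl, id⟩

lemma corona_adj_inr_inl (p : V × W) : (corona G H).Adj (inr p) (inl p.1) := rfl

lemma corona_adj_base {x y : V ⊕ V × W} (h : (corona G H).Adj x y) :
    coronaBase x = coronaBase y ∨ G.Adj (coronaBase x) (coronaBase y) := by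
  rcases x with i | p <;> rcases y with j | q
  exacts [.inr h, .inl h, .inl (Eq.symm h), .inl h.1]

lemma corona_connected (hG : G.Connected) : (corona G H).Connected := by
  have : Nonempty V := hG.nonempty
  have hroot : ∀ x, (corona G H).Reachable x (inl (coronaBase x)) := by
    rintro (i | p)
    · rfl
    · exact (corona_adj_inr_inl p).reachable
  exact ⟨fun x y => (hroot x).trans
    (((hG.preconnected _ _).map (coronaInlHom G H)).trans (hroot y).symm)⟩

lemma corona_dist_inl_inl (hG : G.Connected) (i j : V) :
    (corona G H).dist (inl i) (inl j) = G.dist i j := by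
  refine le_antisymm ?_ ?_
  · obtain ⟨p, hp⟩ := hG.exists_walk_length_eq_dist i j
    have := dist_le (p.map (coronaInlHom G H))
    rwa [Walk.length_map, hp] at this
  · exact dist_le_dist_of_adj_or_eq (fun _ _ h => corona_adj_base h)
      ((corona_connected hG).preconnected (inl i) (inl j))

-- A walk can only leave the copy of `H` at `k` through its root `inl k`.
lemma corona_dist_inl_add_one_le_length {k : V} {u x : V ⊕ V × W}
    (p : (corona G H).Walk u x) (hx : ∀ b, x ≠ inr (k, b)) :
    ∀ c, u = inr (k, c) → (corona G H).dist (inl k) x + 1 ≤ p.length := by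
  induction p with
  | nil => rintro c rfl; exact absurd rfl (hx c)
  | @cons _ v _ h q ih =>
    rintro c rfl
    rw [Walk.length_cons]
    rcases v with j | ⟨j, d⟩
    · obtain rfl : j = k := h
      have := dist_le q
      omega
    · obtain ⟨rfl, -⟩ := h
      have := ih hx d rfl
      omega

lemma corona_dist_inr_right (hG : G.Connected) {x : V ⊕ V × W} {k : V}
    (hx : ∀ b, x ≠ inr (k, b)) (c : W) :
    (corona G H).dist x (inr (k, c)) = (corona G H).dist x (inl k) + 1 := by
  have hconn := corona_connected (H := H) hG
  refine le_antisymm ?_ ?_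
  · calc (corona G H).dist x (inr (k, c))
        ≤ (corona G H).dist x (inl k) + (corona G H).dist (inl k) (inr (k, c)) :=
          hconn.dist_triangle
      _ = _ := by rw [dist_eq_one_iff_adj.2 (corona_adj_inr_inl (k, c)).symm]
  · obtain ⟨p, hp⟩ := hconn.exists_walk_length_eq_dist (inr (k, c)) x
    rw [dist_comm (u := x) (v := inr (k, c)), dist_comm (u := x), ← hp]
    exact corona_dist_inl_add_one_le_length p hx c rfl

lemma corona_dist_inr_left (hG : G.Connected) {x : V ⊕ V × W} {k : V}
    (hx : ∀ b, x ≠ inr (k, b)) (c : W) :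
    (corona G H).dist (inr (k, c)) x = (corona G H).dist (inl k) x + 1 := by
  rw [dist_comm, corona_dist_inr_right hG hx, dist_comm]

lemma corona_dist_inl_inr (hG : G.Connected) (i j : V) (b : W) :
    (corona G H).dist (inl i) (inr (j, b)) = G.dist i j + 1 := by
  rw [corona_dist_inr_right hG (by simp), corona_dist_inl_inl hG]

lemma corona_dist_inr_inl (hG : G.Connected) (i j : V) (a : W) :
    (corona G H).dist (inr (i, a)) (inl j) = G.dist i j + 1 := by
  rw [corona_dist_inr_left hG (by simp), corona_dist_inl_inl hG]

lemma corona_dist_inr_inr (hG : G.Connected) {i j : V} (hij : i ≠ j) (a b : W) :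
    (corona G H).dist (inr (i, a)) (inr (j, b)) = G.dist i j + 2 := by
  rw [corona_dist_inr_left hG (by simp [hij.symm]), corona_dist_inl_inr hG]

lemma corona_dist_inr_inr_self_le (k : V) (a b : W) :
    (corona G H).dist (inr (k, a)) (inr (k, b)) ≤ 2 :=
  dist_le (.cons (corona_adj_inr_inl (k, a)) (.cons (corona_adj_inr_inl (k, b)).symm .nil))

end Distance

section Normalization

variable {W' : Type*} {G : SimpleGraph V} {H : SimpleGraph W} {S : Set (V ⊕ V × W)}

def coronaSet (X Y : Set V) : Set (V ⊕ V × W) := {x | Sum.elim (· ∈ Y) (·.1 ∈ X) x}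

@[simp] lemma inl_mem_coronaSet {X Y : Set V} {i : V} :
    (inl i : V ⊕ V × W) ∈ coronaSet X Y ↔ i ∈ Y := Iff.rfl

@[simp] lemma inr_mem_coronaSet {X Y : Set V} {p : V × W} :
    (inr p : V ⊕ V × W) ∈ coronaSet X Y ↔ p.1 ∈ X := Iff.rfl

def fullCopies (S : Set (V ⊕ V × W)) : Set V := {i | ∀ w, inr (i, w) ∈ S}

def normalRoots (S : Set (V ⊕ V × W)) : Set V := {i | inl i ∈ S} ∪ (fullCopies S)ᶜ

lemma mem_normalRoots {i : V} : i ∈ normalRoots S ↔ inl i ∈ S ∨ i ∉ fullCopies S := Iff.rfl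

lemma IsDistEqSet.exists_inr_mem (hG : G.Connected) (hS : IsDistEqSet (corona G H) S)
    {i : V} {w : W} (hi : inl i ∉ S) (hw : inr (i, w) ∉ S) : ∃ w', inr (i, w') ∈ S := by
  by_contra! hnone
  obtain ⟨z, hz, hd⟩ := hS hi hw inl_ne_inr
  rw [corona_dist_inr_right hG (by rintro b rfl; exact hnone b hz)] at hd
  omega

lemma IsDistEqSet.isVertexCover_fullCopies (hG : G.Connected)
    (hS : IsDistEqSet (corona G H) S) : IsVertexCover (emptyBisector G) (fullCopies S) := by
  rw [isVertexCover_emptyBisector_iff]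
  intro i j hi hj hij
  obtain ⟨a, ha⟩ := not_forall.1 hi
  obtain ⟨b, hb⟩ := not_forall.1 hj
  obtain ⟨z, -, hd⟩ := hS ha hb (by simp [hij])
  have hpos := hG.pos_dist_of_ne hij
  rcases z with k | ⟨k, c⟩
  · rw [corona_dist_inl_inr hG, corona_dist_inl_inr hG] at hd
    exact ⟨k, by omega⟩
  rcases eq_or_ne k i with rfl | hki
  · have := corona_dist_inr_inr_self_le (G := G) (H := H) k c a
    rw [hd, corona_dist_inr_inr hG hij] at this
    omega
  rcases eq_or_ne k j with rfl | hkj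
  · have := corona_dist_inr_inr_self_le (G := G) (H := H) k c b
    rw [← hd, corona_dist_inr_inr hG hki] at this
    rw [SimpleGraph.dist_comm] at hpos
    omega
  rw [corona_dist_inr_inr hG hki, corona_dist_inr_inr hG hkj] at hd
  exact ⟨k, by omega⟩

lemma IsDistEqSet.isVertexCover_normalRoots (hG : G.Connected)
    (hS : IsDistEqSet (corona G H) S) : IsVertexCover (emptyBisector G) (normalRoots S) := by
  rw [isVertexCover_emptyBisector_iff]
  intro i j hi hj hij
  simp only [mem_normalRoots, not_or, not_not] at hi hj
  obtain ⟨z, -, hd⟩ := hS hi.1 hj.1 (by simpa using hij)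
  rcases z with k | ⟨k, c⟩
  · rw [corona_dist_inl_inl hG, corona_dist_inl_inl hG] at hd
    exact ⟨k, hd⟩
  · rw [corona_dist_inr_inl hG, corona_dist_inr_inl hG] at hd
    exact ⟨k, by omega⟩

lemma IsDistEqSet.isForwardEqualizedPair (hG : G.Connected)
    (hS : IsDistEqSet (corona G H) S) :
    IsForwardEqualizedPair G (fullCopies S) (normalRoots S) := by
  refine ⟨Set.eq_univ_of_forall fun i => ?_, fun a ha b hb => ?_⟩
  · by_cases hi : i ∈ fullCopies S
    exacts [.inl hi, .inr (.inr hi)]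
  simp only [Set.mem_sdiff, mem_normalRoots, not_or, not_not] at ha hb
  obtain ⟨β, hβ⟩ := not_forall.1 hb.2
  have hab : a ≠ b := by rintro rfl; exact hb.2 ha.1
  obtain ⟨z, -, hd⟩ := hS ha.2.1 hβ inl_ne_inr
  rcases z with k | ⟨k, c⟩
  · rw [corona_dist_inl_inl hG, corona_dist_inl_inr hG] at hd
    exact ⟨k, hd⟩
  rcases eq_or_ne k b with rfl | hkb
  · have := corona_dist_inr_inr_self_le (G := G) (H := H) k c β
    rw [← hd, corona_dist_inr_inl hG] at this
    have := hG.pos_dist_of_ne hab.symm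
    exact ⟨k, by rw [SimpleGraph.dist_self]; omega⟩
  · rw [corona_dist_inr_inl hG, corona_dist_inr_inr hG hkb] at hd
    exact ⟨k, by omega⟩

lemma exists_mem_coronaSet_dist_eq [Nonempty W] {X Y : Set V} (hG : G.Connected)
    (hXY : X ∪ Y = Set.univ) {k : V} {x y : V ⊕ V × W} (hx : ∀ b, x ≠ inr (k, b))
    (hy : ∀ b, y ≠ inr (k, b))
    (h : (corona G H).dist (inl k) x = (corona G H).dist (inl k) y) :
    ∃ z ∈ coronaSet X Y, (corona G H).dist z x = (corona G H).dist z y := by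
  by_cases hk : k ∈ Y
  · exact ⟨inl k, hk, h⟩
  obtain ⟨w⟩ := ‹Nonempty W›
  refine ⟨inr (k, w), ((hXY ▸ Set.mem_univ k : k ∈ X ∪ Y).resolve_right hk), ?_⟩
  rw [corona_dist_inr_left hG hx, corona_dist_inr_left hG hy, h]

lemma isDistEqSet_coronaSet [Nonempty W] (hG : G.Connected) {X Y : Set V}
    (hX : IsVertexCover (emptyBisector G) X) (hY : IsVertexCover (emptyBisector G) Y)
    (hXY : IsForwardEqualizedPair G X Y) : IsDistEqSet (corona G H) (coronaSet X Y) := by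
  rw [isVertexCover_emptyBisector_iff] at hX hY
  have hcover : ∀ k, k ∈ X ∪ Y := fun k => hXY.1 ▸ Set.mem_univ k
  have mixed : ∀ i j b, i ∉ Y → j ∉ X → ∃ z ∈ coronaSet X Y,
      (corona G H).dist z (inl i) = (corona G H).dist z (inr (j, b)) := by
    intro i j b hi hj
    have hjY := (hcover j).resolve_left hj
    obtain ⟨k, hk⟩ := hXY.2 ⟨(hcover i).resolve_right hi, hi⟩ ⟨hjY, hj⟩
    rcases eq_or_ne k j with rfl | hkj
    · exact ⟨inl k, hjY, by rw [corona_dist_inl_inl hG, corona_dist_inl_inr hG, hk]⟩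
    · exact exists_mem_coronaSet_dist_eq (k := k) hG hXY.1 (by simp) (by simp [hkj.symm])
        (by rw [corona_dist_inl_inl hG, corona_dist_inl_inr hG, hk])
  rintro (i | ⟨i, a⟩) (j | ⟨j, b⟩) hx hy hxy
  · obtain ⟨k, hk⟩ := hY hx hy (by simpa using hxy)
    exact exists_mem_coronaSet_dist_eq (k := k) hG hXY.1 (by simp) (by simp)
      (by rwa [corona_dist_inl_inl hG, corona_dist_inl_inl hG])
  · exact mixed i j b hx hy
  · obtain ⟨z, hz, hd⟩ := mixed j i a hy hx
    exact ⟨z, hz, hd.symm⟩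
  rcases eq_or_ne i j with rfl | hij
  · exact ⟨inl i, (hcover i).resolve_left hx,
      by rw [corona_dist_inl_inr hG, corona_dist_inl_inr hG]⟩
  obtain ⟨k, hk⟩ := hX hx hy hij
  have hki : k ≠ i := by
    rintro rfl; exact hij (hG.dist_eq_zero_iff.1 (by rw [← hk, SimpleGraph.dist_self]))
  have hkj : k ≠ j := by
    rintro rfl
    exact hij (hG.dist_eq_zero_iff.1 (by rw [SimpleGraph.dist_comm, hk, SimpleGraph.dist_self]))
  exact exists_mem_coronaSet_dist_eq (k := k) hG hXY.1 (by simp [hki.symm])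
    (by simp [hkj.symm]) (by rw [corona_dist_inl_inr hG, corona_dist_inl_inr hG, hk])

lemma ncard_coronaSet_le [Finite V] [Finite W] (hG : G.Connected) (e : W ≃ W')
    (hS : IsDistEqSet (corona G H) S) :
    (coronaSet (W := W') (fullCopies S) (normalRoots S)).ncard ≤ S.ncard := by
  classical
  let f : V ⊕ V × W → V ⊕ V × W' :=
    Sum.elim inl fun p => if p.1 ∈ fullCopies S then inr (p.1, e p.2) else inl p.1
  refine (Set.ncard_le_ncard (t := f '' S) ?_ (S.toFinite.image f)).trans
    (Set.ncard_image_le S.toFinite)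
  rintro (i | ⟨i, w'⟩) hx
  · by_cases hiS : inl i ∈ S
    · exact ⟨inl i, hiS, rfl⟩
    have hi : i ∉ fullCopies S := (mem_normalRoots.1 hx).resolve_left hiS
    obtain ⟨w, hw⟩ := not_forall.1 hi
    obtain ⟨w₀, hw₀⟩ := hS.exists_inr_mem hG hiS hw
    exact ⟨inr (i, w₀), hw₀, by simp [f, hi]⟩
  · exact ⟨inr (i, e.symm w'), hx _, by simp [f, inr_mem_coronaSet.1 hx]⟩

end Normalization

lemma eqdim_corona_le_of_equiv {W' : Type*} [Finite V] [Finite W] [Nonempty W']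
    {G : SimpleGraph V} (hG : G.Connected) (H : SimpleGraph W) (H' : SimpleGraph W')
    (e : W ≃ W') : eqdim (corona G H') ≤ eqdim (corona G H) := by
  obtain ⟨S, hS, hcard⟩ := exists_isDistEqSet_ncard_eq_eqdim (corona G H)
  calc eqdim (corona G H')
      ≤ (coronaSet (fullCopies S) (normalRoots S)).ncard :=
        eqdim_le_ncard (isDistEqSet_coronaSet hG (hS.isVertexCover_fullCopies hG)
          (hS.isVertexCover_normalRoots hG) (hS.isForwardEqualizedPair hG))
    _ ≤ S.ncard := ncard_coronaSet_le hG e hS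
    _ = eqdim (corona G H) := hcard

/-- If `H` and `H'` have the same order, then
`ξ(G ⊙ H) = ξ(G ⊙ H')`. -/
theorem eqdim_corona_eq_of_card_eq {W' : Type v} [Fintype V] [Fintype W] [Fintype W']
    [Nonempty W] [Nonempty W'] (G : SimpleGraph V) (hG : G.Connected)
    (H : SimpleGraph W) (H' : SimpleGraph W')
    (hcard : Fintype.card W = Fintype.card W') :
    eqdim (corona G H) = eqdim (corona G H') := by
  let e := Fintype.equivOfCardEq hcard
  exact le_antisymm (eqdim_corona_le_of_equiv hG H' H e.symm)
    (eqdim_corona_le_of_equiv hG H H' e)
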